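/- Every minimal unsatisfiable 2CNF formula containing at least one unit clause has a read-once resolution refutation. -/

import Mathlib

/-! Basic definitions: literals, clauses, CNF formulas. -/

/-- A literal is a variable together with a polarity. -/
abbrev Lit (V : Type) : Type := V × Bool

/-- Negation of a literal. -/
def Lit.neg {V : Type} (l : Lit V) : Lit V := (l.1, !l.2)

/-- A clause is a finite set of literals (a disjunction). -/
abbrev Clause (V : Type) : Type := Finset (Lit V)

/-- A CNF formula is a finite set of clauses (a conjunction). -/
abbrev CNF (V : Type) : Type := Finset (Clause V)

section BasicDefs

variable {V : Type} [DecidableEq V]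

/-- A literal holds under a Boolean assignment. -/
def Lit.holds (a : V → Bool) (l : Lit V) : Prop := a l.1 = l.2

/-- A clause holds under an assignment if some literal in it holds. -/
def Clause.holds (a : V → Bool) (C : Clause V) : Prop := ∃ l ∈ C, Lit.holds a l

/-- A CNF formula is satisfiable. -/
def CNF.sat (Φ : CNF V) : Prop := ∃ a : V → Bool, ∀ C ∈ Φ, Clause.holds a C

/-- A CNF formula is unsatisfiable. -/
def CNF.unsat (Φ : CNF V) : Prop := ¬ CNF.sat Φ

/-- A CNF formula is minimal unsatisfiable: it is unsatisfiable and every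
proper subformula is satisfiable. -/
def CNF.minUnsat (Φ : CNF V) : Prop :=
  CNF.unsat Φ ∧ ∀ Ψ : CNF V, Ψ ⊂ Φ → CNF.sat Ψ

/-- The set of variables occurring in a formula. -/
def CNF.vars (Φ : CNF V) : Finset V := Φ.biUnion (fun C => C.image Prod.fst)

/-- The deficiency of a formula: number of clauses minus number of variables. -/
def CNF.deficiency (Φ : CNF V) : ℤ := (Φ.card : ℤ) - ((CNF.vars Φ).card : ℤ)

/-- MU(1): minimal unsatisfiable with deficiency 1. -/
def CNF.MU1 (Φ : CNF V) : Prop := CNF.minUnsat Φ ∧ CNF.deficiency Φ = 1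

/-- A 2CNF formula: every clause has at most 2 literals. -/
def CNF.is2CNF (Φ : CNF V) : Prop := ∀ C ∈ Φ, C.card ≤ 2

/-- `R` is the resolvent of `C1` and `C2` upon the matching variable `x`. -/
def IsResolvent (C1 C2 R : Clause V) (x : V) : Prop :=
  (x, true) ∈ C1 ∧ (x, false) ∈ C2 ∧
    R = (C1.erase (x, true)) ∪ (C2.erase (x, false))

/-- One step of read-once resolution on a multiset of clauses: the two parent
clauses are removed from the current multiset and the resolvent is added. -/
def RORStep (S T : Multiset (Clause V)) : Prop :=
  ∃ (C1 C2 R : Clause V) (x : V),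
    C1 ∈ S ∧ C2 ∈ S.erase C1 ∧ IsResolvent C1 C2 R x ∧
    T = R ::ₘ ((S.erase C1).erase C2)

/-- Read-once derivability of the clause `π` from the multiset of clauses `S`. -/
def RORDeriv (S : Multiset (Clause V)) (π : Clause V) : Prop :=
  ∃ T : Multiset (Clause V), Relation.ReflTransGen RORStep S T ∧ π ∈ T

/-- The formula `Φ` has a read-once resolution refutation. -/
def CNF.hasROR (Φ : CNF V) : Prop := RORDeriv (Φ.val) (∅ : Clause V)

end BasicDefs

/-- A resolution step: two parent clauses, a matching variable and a resolvent. -/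
structure RStep (V : Type) where
  c1 : Clause V
  c2 : Clause V
  mv : V
  res : Clause V

section MoreDefs

variable {V : Type} [DecidableEq V]

/-- Validity of a resolution step. -/
def RStep.valid (s : RStep V) : Prop := IsResolvent s.c1 s.c2 s.res s.mv

/-- A list of resolution steps is a resolution derivation from `Φ`: each step is a
valid resolution step whose parents are clauses of `Φ` or resolvents of earlier steps. -/
def IsResDeriv (Φ : CNF V) (L : List (RStep V)) : Prop :=
  ∀ (i : ℕ) (h : i < L.length),
    RStep.valid (L.get ⟨i, h⟩) ∧
    ((L.get ⟨i, h⟩).c1 ∈ Φ ∨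
      ∃ j, ∃ _ : j < i, (L.get ⟨j, by omega⟩).res = (L.get ⟨i, h⟩).c1) ∧
    ((L.get ⟨i, h⟩).c2 ∈ Φ ∨
      ∃ j, ∃ _ : j < i, (L.get ⟨j, by omega⟩).res = (L.get ⟨i, h⟩).c2)

/-- `Φ` has a Var-ROR refutation: a resolution refutation in which every variable
is used at most once as a matching variable. -/
def CNF.hasVarROR (Φ : CNF V) : Prop :=
  ∃ L : List (RStep V), IsResDeriv Φ L ∧ (L.map RStep.mv).Nodup ∧
    ∃ s ∈ L, s.res = (∅ : Clause V)

/-- `(Fx, Fnx)` is a splitting of `Φ` over the variable `x`: `Fx` consists of all clauses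
of `Φ` containing the literal `x` with that literal removed, together with some clauses of
`Φ` not containing `x` nor `¬x` (and symmetrically for `Fnx` with `¬x`), and both `Fx` and
`Fnx` are minimal unsatisfiable. -/
def IsSplitting (Φ : CNF V) (x : V) (Fx Fnx : CNF V) : Prop :=
  ∃ S1 S2 : CNF V,
    S1 ⊆ Φ ∧ S2 ⊆ Φ ∧
    (∀ C ∈ S1, (x, true) ∉ C ∧ (x, false) ∉ C) ∧
    (∀ C ∈ S2, (x, true) ∉ C ∧ (x, false) ∉ C) ∧
    Fx = ((Φ.filter (fun C => (x, true) ∈ C)).image (fun C => C.erase (x, true))) ∪ S1 ∧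
    Fnx = ((Φ.filter (fun C => (x, false) ∈ C)).image (fun C => C.erase (x, false))) ∪ S2 ∧
    CNF.minUnsat Fx ∧ CNF.minUnsat Fnx

/-- A disjunctive splitting: a splitting where `Fx` and `Fnx` have no clause `σ_i`
(clause of `Φ` mentioning neither `x` nor `¬x`) in common. -/
def IsDisjSplitting (Φ : CNF V) (x : V) (Fx Fnx : CNF V) : Prop :=
  ∃ S1 S2 : CNF V,
    S1 ⊆ Φ ∧ S2 ⊆ Φ ∧ Disjoint S1 S2 ∧
    (∀ C ∈ S1, (x, true) ∉ C ∧ (x, false) ∉ C) ∧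
    (∀ C ∈ S2, (x, true) ∉ C ∧ (x, false) ∉ C) ∧
    Fx = ((Φ.filter (fun C => (x, true) ∈ C)).image (fun C => C.erase (x, true))) ∪ S1 ∧
    Fnx = ((Φ.filter (fun C => (x, false) ∈ C)).image (fun C => C.erase (x, false))) ∪ S2 ∧
    CNF.minUnsat Fx ∧ CNF.minUnsat Fnx

end MoreDefs


/-!
Induction on the number of clauses. Let `{l}` be a unit clause of `Φ`. If `{¬l}` is a clause too,
one resolution step refutes `Φ`. Otherwise some clause `{¬l, m}` exists (else `l := true` would
satisfy `Φ`), and unit propagation — deleting `{l}` and erasing `¬l` from the other clauses —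
gives a smaller minimal unsatisfiable 2CNF formula with the unit clause `{m}`. Its read-once
refutation, replayed on the original clauses, derives `∅` or `{¬l}` without touching `{l}`; in the
latter case one more step against `{l}` yields `∅`. Since minimal unsatisfiable formulas contain no
two nested clauses, propagation identifies no two clauses, so the replay is read-once as well.
-/

variable {V : Type}

lemma Lit.neg_ne (l : Lit V) : l.neg ≠ l := by
  rcases l with ⟨x, b⟩
  simp [Lit.neg]

lemma Lit.eq_or_eq_neg_of_fst_eq {m l : Lit V} (h : m.1 = l.1) : m = l ∨ m = l.neg := by
  rcases m with ⟨u, b⟩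
  rcases l with ⟨v, c⟩
  obtain rfl : u = v := h
  cases b <;> cases c <;> simp [Lit.neg]

lemma Lit.not_holds_neg {a : V → Bool} {l : Lit V} (h : l.holds a) : ¬ l.neg.holds a := by
  simp_all [Lit.holds, Lit.neg]

lemma CNF.sat.mono {Φ Ψ : CNF V} (h : Φ.sat) (hsub : Ψ ⊆ Φ) : Ψ.sat :=
  let ⟨a, ha⟩ := h
  ⟨a, fun C hC => ha C (hsub hC)⟩

variable [DecidableEq V]

lemma Lit.holds_update_self (a : V → Bool) (l : Lit V) :
    l.holds (Function.update a l.1 l.2) := by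
  simp [Lit.holds]

lemma Lit.holds_update_of_ne_neg {a : V → Bool} {l m : Lit V} (hm : m ≠ l.neg)
    (h : m.holds a) : m.holds (Function.update a l.1 l.2) := by
  by_cases hml : m.1 = l.1
  · rcases Lit.eq_or_eq_neg_of_fst_eq hml with rfl | rfl
    · exact Lit.holds_update_self a m
    · exact absurd rfl hm
  · simpa [Lit.holds, hml] using h

namespace CNF

lemma minUnsat_iff_sat_erase {Φ : CNF V} :
    Φ.minUnsat ↔ Φ.unsat ∧ ∀ C ∈ Φ, CNF.sat (Φ.erase C) := by
  refine ⟨fun h => ⟨h.1, fun C hC => h.2 _ (Finset.erase_ssubset hC)⟩, fun h => ⟨h.1, ?_⟩⟩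
  intro Ψ hΨ
  obtain ⟨C, hC, hsub⟩ := Finset.ssubset_iff_exists_subset_erase.1 hΨ
  exact (h.2 C hC).mono hsub

lemma minUnsat.eq_of_subset {Φ : CNF V} (h : Φ.minUnsat) {C₁ C₂ : Clause V} (h₁ : C₁ ∈ Φ)
    (h₂ : C₂ ∈ Φ) (hsub : C₁ ⊆ C₂) : C₁ = C₂ := by
  by_contra hne
  obtain ⟨a, ha⟩ := h.2 (Φ.erase C₂) (Finset.erase_ssubset h₂)
  refine h.1 ⟨a, fun C hC => ?_⟩
  by_cases hC₂ : C = C₂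
  · obtain ⟨m, hm, hma⟩ := ha C₁ (Finset.mem_erase.2 ⟨hne, h₁⟩)
    exact ⟨m, hC₂ ▸ hsub hm, hma⟩
  · exact ha C (Finset.mem_erase.2 ⟨hC₂, hC⟩)

lemma minUnsat.injOn_erase {Φ : CNF V} (h : Φ.minUnsat) (x : Lit V) :
    Set.InjOn (Finset.erase · x) Φ := by
  have key : ∀ {D₁ D₂ : Clause V}, D₁ ∈ Φ → D₂ ∈ Φ → D₁.erase x = D₂.erase x → x ∉ D₂ →
      D₁ = D₂ := fun h₁ h₂ heq hx₂ =>
    (h.eq_of_subset h₂ h₁ (Finset.erase_eq_of_notMem hx₂ ▸ heq ▸ Finset.erase_subset x _)).symm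
  intro D₁ h₁ D₂ h₂ heq
  by_cases hx₁ : x ∈ D₁ <;> by_cases hx₂ : x ∈ D₂
  · exact Finset.erase_injOn' x hx₁ hx₂ heq
  · exact key h₁ h₂ heq hx₂
  · exact (key h₂ h₁ heq.symm hx₁).symm
  · exact key h₁ h₂ heq hx₂

lemma minUnsat.exists_neg_mem {Φ : CNF V} (h : Φ.minUnsat) {l : Lit V} (hl : {l} ∈ Φ) :
    ∃ D ∈ Φ, l.neg ∈ D := by
  by_contra! hno
  obtain ⟨a, ha⟩ := h.2 (Φ.erase {l}) (Finset.erase_ssubset hl)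
  refine h.1 ⟨Function.update a l.1 l.2, fun C hC => ?_⟩
  by_cases hCl : C = {l}
  · exact ⟨l, hCl ▸ Finset.mem_singleton_self l, Lit.holds_update_self a l⟩
  · obtain ⟨m, hm, hma⟩ := ha C (Finset.mem_erase.2 ⟨hCl, hC⟩)
    exact ⟨m, hm, Lit.holds_update_of_ne_neg (fun he => hno C hC (he ▸ hm)) hma⟩

def unitPropagate (Φ : CNF V) (l : Lit V) : CNF V :=
  (Φ.erase {l}).image (Finset.erase · l.neg)

lemma card_unitPropagate_lt {Φ : CNF V} {l : Lit V} (hl : {l} ∈ Φ) :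
    (Φ.unitPropagate l).card < Φ.card :=
  Finset.card_image_le.trans_lt (Finset.card_erase_lt_of_mem hl)

lemma is2CNF.unitPropagate {Φ : CNF V} (h : Φ.is2CNF) (l : Lit V) :
    (Φ.unitPropagate l).is2CNF := by
  intro E hE
  obtain ⟨D, hD, rfl⟩ := Finset.mem_image.1 hE
  exact (Finset.card_erase_le).trans (h D (Finset.mem_of_mem_erase hD))

lemma unsat.unitPropagate {Φ : CNF V} (h : Φ.unsat) (l : Lit V) :
    (Φ.unitPropagate l).unsat := by
  rintro ⟨a, ha⟩
  refine h ⟨Function.update a l.1 l.2, fun D hD => ?_⟩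
  by_cases hDl : D = {l}
  · exact ⟨l, hDl ▸ Finset.mem_singleton_self l, Lit.holds_update_self a l⟩
  · obtain ⟨m, hm, hma⟩ :=
      ha _ (Finset.mem_image_of_mem _ (Finset.mem_erase.2 ⟨hDl, hD⟩))
    exact ⟨m, Finset.mem_of_mem_erase hm,
      Lit.holds_update_of_ne_neg (Finset.ne_of_mem_erase hm) hma⟩

lemma minUnsat.unitPropagate {Φ : CNF V} (h : Φ.minUnsat) {l : Lit V} (hl : {l} ∈ Φ) :
    (Φ.unitPropagate l).minUnsat := by
  refine minUnsat_iff_sat_erase.2 ⟨h.1.unitPropagate l, fun E₀ hE₀ => ?_⟩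
  obtain ⟨D₀, hD₀, rfl⟩ := Finset.mem_image.1 hE₀
  obtain ⟨a, ha⟩ := h.2 _ (Finset.erase_ssubset (Finset.mem_of_mem_erase hD₀))
  have hla : l.holds a := by
    obtain ⟨m, hm, hma⟩ := ha {l} (Finset.mem_erase.2 ⟨(Finset.ne_of_mem_erase hD₀).symm, hl⟩)
    exact Finset.mem_singleton.1 hm ▸ hma
  refine ⟨a, fun E hE => ?_⟩
  obtain ⟨hEE₀, hE⟩ := Finset.mem_erase.1 hE
  obtain ⟨D, hD, rfl⟩ := Finset.mem_image.1 hE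
  have hDD₀ : D ≠ D₀ := by rintro rfl; exact hEE₀ rfl
  obtain ⟨m, hm, hma⟩ := ha D (Finset.mem_erase.2 ⟨hDD₀, Finset.mem_of_mem_erase hD⟩)
  exact ⟨m, Finset.mem_erase.2 ⟨fun he => Lit.not_holds_neg hla (he ▸ hma), hm⟩, hma⟩

lemma minUnsat.exists_singleton_mem_unitPropagate {Φ : CNF V} (h : Φ.minUnsat) (h2 : Φ.is2CNF)
    {l : Lit V} (hl : {l} ∈ Φ) (hnl : {l.neg} ∉ Φ) : ∃ m, {m} ∈ Φ.unitPropagate l := by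
  obtain ⟨D, hD, hnD⟩ := h.exists_neg_mem hl
  have hDl : D ≠ {l} := by
    rintro rfl
    exact Lit.neg_ne l (Finset.mem_singleton.1 hnD)
  have hne : (D.erase l.neg).Nonempty := by
    rw [Finset.nonempty_iff_ne_empty, Ne, Finset.erase_eq_empty_iff, not_or]
    exact ⟨Finset.ne_empty_of_mem hnD, fun he => hnl (he ▸ hD)⟩
  have hle : (D.erase l.neg).card ≤ 1 := by
    rw [Finset.card_erase_of_mem hnD]
    have := h2 D hD
    omega
  have hcard : (D.erase l.neg).card = 1 := le_antisymm hle hne.card_pos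
  obtain ⟨m, hm⟩ := Finset.card_eq_one.1 hcard
  exact ⟨m, hm ▸ Finset.mem_image_of_mem _ (Finset.mem_erase.2 ⟨hDl, hD⟩)⟩

end CNF

lemma Multiset.Rel.exists_mem_erase {α β : Type*} [DecidableEq α] [DecidableEq β]
    {r : α → β → Prop} {s : Multiset α} {t : Multiset β} (h : Multiset.Rel r s t) {a : α}
    (ha : a ∈ s) : ∃ b ∈ t, r a b ∧ Multiset.Rel r (s.erase a) (t.erase b) := by
  rw [← Multiset.cons_erase ha, Multiset.rel_cons_left] at h
  obtain ⟨b, t', hab, hrel, rfl⟩ := h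
  exact ⟨b, Multiset.mem_cons_self b t', hab, by rwa [Multiset.erase_cons_head]⟩

/-! Below, `C'.erase e = C` says that `C'` is `C`, possibly weakened by the literal `e ∉ C`. -/

lemma IsResolvent.of_erase_eq {C₁ C₂ R C₁' C₂' : Clause V} {y : V} {e : Lit V}
    (h : IsResolvent C₁ C₂ R y) (h₁ : C₁'.erase e = C₁) (h₂ : C₂'.erase e = C₂) :
    IsResolvent C₁' C₂' (C₁'.erase (y, true) ∪ C₂'.erase (y, false)) y ∧
      (C₁'.erase (y, true) ∪ C₂'.erase (y, false)).erase e = R := by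
  obtain ⟨hy₁, hy₂, rfl⟩ := h
  subst h₁ h₂
  refine ⟨⟨Finset.mem_of_mem_erase hy₁, Finset.mem_of_mem_erase hy₂, rfl⟩, ?_⟩
  rw [Finset.erase_union_distrib, Finset.erase_right_comm, Finset.erase_right_comm (s := C₂')]

lemma RORStep.exists_of_rel_erase {e : Lit V} {S S' T : Multiset (Clause V)}
    (hrel : Multiset.Rel (fun C C' => C'.erase e = C) S S') (h : RORStep S T) :
    ∃ T', RORStep S' T' ∧ Multiset.Rel (fun C C' => C'.erase e = C) T T' := by
  obtain ⟨C₁, C₂, R, y, h₁, h₂, hres, rfl⟩ := h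
  obtain ⟨C₁', h₁', he₁, hrel₁⟩ := hrel.exists_mem_erase h₁
  obtain ⟨C₂', h₂', he₂, hrel₂⟩ := hrel₁.exists_mem_erase h₂
  obtain ⟨hres', heR⟩ := hres.of_erase_eq he₁ he₂
  exact ⟨_, ⟨C₁', C₂', _, y, h₁', h₂', hres', rfl⟩, hrel₂.cons heR⟩

lemma RORStep.reflTransGen_exists_of_rel_erase {e : Lit V} {S S' T : Multiset (Clause V)}
    (hrel : Multiset.Rel (fun C C' => C'.erase e = C) S S')
    (h : Relation.ReflTransGen RORStep S T) :
    ∃ T', Relation.ReflTransGen RORStep S' T' ∧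
      Multiset.Rel (fun C C' => C'.erase e = C) T T' := by
  induction h with
  | refl => exact ⟨S', .refl, hrel⟩
  | tail _ hstep ih =>
    obtain ⟨U', hU', hrelU⟩ := ih
    obtain ⟨T', hstep', hrelT⟩ := RORStep.exists_of_rel_erase hrelU hstep
    exact ⟨T', hU'.tail hstep', hrelT⟩

lemma RORStep.cons {S T : Multiset (Clause V)} (C : Clause V) (h : RORStep S T) :
    RORStep (C ::ₘ S) (C ::ₘ T) := by
  obtain ⟨C₁, C₂, R, y, h₁, h₂, hres, rfl⟩ := h
  refine ⟨C₁, C₂, R, y, Multiset.mem_cons_of_mem h₁, ?_, hres, ?_⟩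
  · rw [Multiset.erase_cons_tail_of_mem h₁]
    exact Multiset.mem_cons_of_mem h₂
  · rw [Multiset.erase_cons_tail_of_mem h₁, Multiset.erase_cons_tail_of_mem h₂,
      Multiset.cons_swap]

lemma RORStep.exists_empty_of_complementary_units {S : Multiset (Clause V)} {l : Lit V}
    (h : {l} ∈ S) (hn : {l.neg} ∈ S.erase {l}) : ∃ T, RORStep S T ∧ ∅ ∈ T := by
  have hres : ∀ x : V, IsResolvent {(x, true)} {(x, false)} ∅ x := fun x => by
    simp [IsResolvent]
  rcases l with ⟨x, _ | _⟩
  · have hne : ({(x, false)} : Clause V) ≠ {(x, true)} := by simp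
    exact ⟨_, ⟨_, _, _, x, Multiset.mem_of_mem_erase hn,
      (Multiset.mem_erase_of_ne hne).2 h, hres x, rfl⟩, Multiset.mem_cons_self _ _⟩
  · exact ⟨_, ⟨_, _, _, x, h, hn, hres x, rfl⟩, Multiset.mem_cons_self _ _⟩

namespace CNF

lemma hasROR_of_complementary_units {Φ : CNF V} {l : Lit V} (hl : {l} ∈ Φ) (hnl : {l.neg} ∈ Φ) :
    Φ.hasROR := by
  have hne : ({l.neg} : Clause V) ≠ {l} := by simpa using Lit.neg_ne l
  obtain ⟨T, hT, hemp⟩ :=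
    RORStep.exists_empty_of_complementary_units hl ((Multiset.mem_erase_of_ne hne).2 hnl)
  exact ⟨T, .single hT, hemp⟩

lemma minUnsat.hasROR_of_hasROR_unitPropagate {Φ : CNF V} (h : Φ.minUnsat) {l : Lit V}
    (hl : {l} ∈ Φ) (hprop : (Φ.unitPropagate l).hasROR) : Φ.hasROR := by
  obtain ⟨T, hT, hemp⟩ := hprop
  have hinj : Set.InjOn (Finset.erase · l.neg) (Φ.erase {l} : Set (Clause V)) :=
    (h.injOn_erase _).mono (Finset.coe_subset.2 (Finset.erase_subset _ _))
  have hrel : Multiset.Rel (fun C C' => C'.erase l.neg = C)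
      (Φ.unitPropagate l).val (Φ.erase {l}).val := by
    rw [CNF.unitPropagate, Finset.image_val_of_injOn hinj, Multiset.rel_map_left]
    exact Multiset.rel_refl_of_refl_on fun _ _ => rfl
  obtain ⟨T', hT', hrelT⟩ := RORStep.reflTransGen_exists_of_rel_erase hrel hT
  obtain ⟨E, hE, hEe, -⟩ := hrelT.exists_mem_erase hemp
  have hlift : Relation.ReflTransGen RORStep Φ.val ({l} ::ₘ T') := by
    rw [← Multiset.cons_erase (Finset.mem_def.1 hl), ← Finset.erase_val]
    exact Relation.ReflTransGen.lift (Multiset.cons {l}) (fun _ _ => RORStep.cons {l}) _ _ hT'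
  rcases (Finset.erase_eq_empty_iff _ _).1 hEe with rfl | rfl
  · exact ⟨_, hlift, Multiset.mem_cons_of_mem hE⟩
  · obtain ⟨U, hU, hempU⟩ := RORStep.exists_empty_of_complementary_units
      (Multiset.mem_cons_self {l} T') (by rwa [Multiset.erase_cons_head])
    exact ⟨U, hlift.tail hU, hempU⟩

theorem minUnsat.hasROR_of_is2CNF_of_singleton_mem {Φ : CNF V} (h : Φ.minUnsat) (h2 : Φ.is2CNF)
    {l : Lit V} (hl : {l} ∈ Φ) : Φ.hasROR := by
  by_cases hnl : {l.neg} ∈ Φ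
  · exact hasROR_of_complementary_units hl hnl
  · obtain ⟨m, hm⟩ := h.exists_singleton_mem_unitPropagate h2 hl hnl
    exact h.hasROR_of_hasROR_unitPropagate hl
      ((h.unitPropagate hl).hasROR_of_is2CNF_of_singleton_mem (h2.unitPropagate l) hm)
termination_by Φ.card
decreasing_by exact card_unitPropagate_lt hl

end CNF

/-- Every minimal unsatisfiable 2CNF formula containing at least one
unit clause has a read-once resolution refutation. -/
theorem stmt10 {V : Type} [DecidableEq V] (Φ : CNF V)
    (h2 : CNF.is2CNF Φ) (hmu : CNF.minUnsat Φ)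
    (hunit : ∃ C ∈ Φ, C.card = 1) :
    CNF.hasROR Φ := by
  obtain ⟨C, hC, hcard⟩ := hunit
  obtain ⟨l, rfl⟩ := Finset.card_eq_one.1 hcard
  exact hmu.hasROR_of_is2CNF_of_singleton_mem h2 hC
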